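/- arXiv:2501.15285 — 2 statements merged into one kernel-verified Lean document; each statement's English description precedes it below -/
import Mathlib

section
/- Let v₀ be a finite convex function on an open convex neighbourhood U of x in ℝⁿ and S a linear subspace of ℝⁿ. If v₀ is differentiable at x along every direction h ∈ S \ {0} (i.e., the two-sided directional derivative exists), then the projection of the subdifferential ∂v₀(x) onto S is a singleton. -/
open Filter Topology RealInnerProductSpace

set_option maxHeartbeats 1000000 in
theorem projection_subdifferential_singleton {n : ℕ}
    {U : Set (EuclideanSpace ℝ (Fin n))} (hU : IsOpen U) (hUconv : Convex ℝ U)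
    {x : EuclideanSpace ℝ (Fin n)} (hx : x ∈ U)
    {v₀ : EuclideanSpace ℝ (Fin n) → ℝ} (hconv : ConvexOn ℝ U v₀)
    (S : Submodule ℝ (EuclideanSpace ℝ (Fin n)))
    (hdiff : ∀ h ∈ S, h ≠ 0 →
      ∃ d : ℝ, Tendsto (fun t : ℝ => (v₀ (x + t • h) - v₀ x) / t)
        (𝓝[≠] (0 : ℝ)) (𝓝 d)) :
    ∃ q : EuclideanSpace ℝ (Fin n),
      (fun p => ((S.orthogonalProjectionOnto p : EuclideanSpace ℝ (Fin n)))) ''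
        {p | ∀ y ∈ U, v₀ y ≥ v₀ x + ⟪p, y - x⟫} = {q} := by
  classical
  set D : Set (EuclideanSpace ℝ (Fin n)) := {p | ∀ y ∈ U, v₀ y ≥ v₀ x + ⟪p, y - x⟫} with hD
  -- ## Step 1 : the subdifferential D is nonempty
  set s : Set ((EuclideanSpace ℝ (Fin n)) × ℝ) := {z | z.1 ∈ U ∧ v₀ z.1 < z.2} with hs
  have hepi : Convex ℝ s := hconv.convex_strict_epigraph
  have hopen : IsOpen s := by
    have h1 : ContinuousOn (fun z : (EuclideanSpace ℝ (Fin n)) × ℝ => v₀ z.1)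
        (U ×ˢ Set.univ) :=
      (hconv.continuousOn hU).comp continuousOn_fst (fun z hz => hz.1)
    have hcont : ContinuousOn (fun z : (EuclideanSpace ℝ (Fin n)) × ℝ => z.2 - v₀ z.1)
        (U ×ˢ Set.univ) := ContinuousOn.sub continuousOn_snd h1
    have hset : s = (U ×ˢ Set.univ) ∩
        (fun z : (EuclideanSpace ℝ (Fin n)) × ℝ => z.2 - v₀ z.1) ⁻¹' (Set.Ioi 0) := by
      ext z
      simp [hs, sub_pos, Set.mem_prod]
    rw [hset]
    exact hcont.isOpen_inter_preimage (hU.prod isOpen_univ) isOpen_Ioi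
  have hxnot : ((x, v₀ x) : (EuclideanSpace ℝ (Fin n)) × ℝ) ∉ s := by simp [hs]
  obtain ⟨f, hf⟩ := geometric_hahn_banach_open_point hepi hopen hxnot
  set c : ℝ := f (0, 1) with hc
  have hdec : ∀ (y : EuclideanSpace ℝ (Fin n)) (t : ℝ), f (y, t) = f (y, 0) + t * c := by
    intro y t
    have hyt : ((y, t) : (EuclideanSpace ℝ (Fin n)) × ℝ)
        = (y, 0) + t • ((0 : EuclideanSpace ℝ (Fin n)), (1 : ℝ)) := by
      simp [Prod.ext_iff]
    rw [hyt, map_add, map_smul]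
    simp [hc]
  have hfx : f (x, v₀ x) = f (x, 0) + v₀ x * c := hdec _ _
  have hcneg : c < 0 := by
    have h1 : ((x, v₀ x + 1) : (EuclideanSpace ℝ (Fin n)) × ℝ) ∈ s := ⟨hx, by simp⟩
    have h2 := hf _ h1
    rw [hdec _ _, hfx] at h2
    linarith
  have key : ∀ y ∈ U, f (y, 0) + c * v₀ y ≤ f (x, 0) + c * v₀ x := by
    intro y hy
    by_contra hlt
    push_neg at hlt
    set ε : ℝ := (f (y, 0) + c * v₀ y - (f (x, 0) + c * v₀ x)) / (2 * (-c)) with hε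
    have hεpos : 0 < ε := div_pos (by linarith) (by linarith)
    have hmem : ((y, v₀ y + ε) : (EuclideanSpace ℝ (Fin n)) × ℝ) ∈ s := ⟨hy, by simp [hεpos]⟩
    have h2 := hf _ hmem
    rw [hdec _ _, hfx] at h2
    have h3 : ε * (2 * -c) = f (y, 0) + c * v₀ y - (f (x, 0) + c * v₀ x) :=
      div_mul_cancel₀ _ ((by linarith : (0:ℝ) < 2 * -c).ne')
    ring_nf at h2 h3
    nlinarith
  set g : (EuclideanSpace ℝ (Fin n)) →L[ℝ] ℝ :=
    f.comp (ContinuousLinearMap.inl ℝ (EuclideanSpace ℝ (Fin n)) ℝ) with hg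
  set p₀ : EuclideanSpace ℝ (Fin n) :=
    (InnerProductSpace.toDual ℝ (EuclideanSpace ℝ (Fin n))).symm g with hp₀
  have hgp : ∀ y : EuclideanSpace ℝ (Fin n), ⟪p₀, y⟫ = f (y, 0) := by
    intro y
    rw [hp₀, InnerProductSpace.toDual_symm_apply]
    simp [hg]
  set p : EuclideanSpace ℝ (Fin n) := (-c)⁻¹ • p₀ with hp
  have hpD : p ∈ D := by
    intro y hy
    have hk := key y hy
    have hinner : ⟪p, y - x⟫ = (-c)⁻¹ * (f (y, 0) - f (x, 0)) := by
      rw [hp, real_inner_smul_left, inner_sub_right, hgp, hgp]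
    have hle2 : (-c)⁻¹ * (f (y, 0) - f (x, 0)) ≤ v₀ y - v₀ x := by
      rw [inv_mul_le_iff₀ (by linarith : (0:ℝ) < -c)]
      linarith
    rw [ge_iff_le, hinner]
    linarith
  -- ## Step 2 : all subgradients have the same inner product with members of S
  have huniq : ∀ p' ∈ D, ∀ q' ∈ D, ∀ h ∈ S, ⟪p', h⟫ = ⟪q', h⟫ := by
    have main : ∀ p' ∈ D, ∀ h ∈ S, h ≠ 0 → ∀ d : ℝ,
        Tendsto (fun t : ℝ => (v₀ (x + t • h) - v₀ x) / t) (𝓝[≠] (0 : ℝ)) (𝓝 d) →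
        ⟪p', h⟫ = d := by
      intro p' hp' h _ _ d hd
      have hcont : Continuous (fun t : ℝ => x + t • h) :=
        continuous_const.add (continuous_id.smul continuous_const)
      have hten : Tendsto (fun t : ℝ => x + t • h) (𝓝 0) (𝓝 x) := by
        have := hcont.tendsto 0
        simpa using this
      have hsmall : ∀ᶠ t : ℝ in 𝓝 (0 : ℝ), x + t • h ∈ U :=
        hten.eventually (hU.eventually_mem hx)
      have hineq : ∀ t : ℝ, x + t • h ∈ U →
          v₀ x + t * ⟪p', h⟫ ≤ v₀ (x + t • h) := by
        intro t ht
        have := hp' _ ht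
        rw [add_sub_cancel_left, real_inner_smul_right] at this
        linarith
      have hle : ⟪p', h⟫ ≤ d := by
        have hd' : Tendsto (fun t : ℝ => (v₀ (x + t • h) - v₀ x) / t)
            (𝓝[>] (0 : ℝ)) (𝓝 d) :=
          hd.mono_left (nhdsWithin_mono 0 (fun t ht => ne_of_gt ht))
        refine ge_of_tendsto hd' ?_
        filter_upwards [hsmall.filter_mono nhdsWithin_le_nhds,
          self_mem_nhdsWithin] with t htU (htpos : (0:ℝ) < t)
        rw [le_div_iff₀ htpos]
        have := hineq t htU
        nlinarith
      have hge : d ≤ ⟪p', h⟫ := by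
        have hd' : Tendsto (fun t : ℝ => (v₀ (x + t • h) - v₀ x) / t)
            (𝓝[<] (0 : ℝ)) (𝓝 d) :=
          hd.mono_left (nhdsWithin_mono 0 (fun t ht => ne_of_lt ht))
        refine le_of_tendsto hd' ?_
        filter_upwards [hsmall.filter_mono nhdsWithin_le_nhds,
          self_mem_nhdsWithin] with t htU (htneg : t < (0:ℝ))
        rw [div_le_iff_of_neg htneg]
        have := hineq t htU
        nlinarith
      linarith
    intro p' hp' q' hq' h hS
    by_cases hne : h = 0
    · simp [hne]
    · obtain ⟨d, hd⟩ := hdiff h hS hne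
      rw [main p' hp' h hS hne d hd, main q' hq' h hS hne d hd]
  -- ## Conclusion
  refine ⟨(S.orthogonalProjectionOnto p : EuclideanSpace ℝ (Fin n)), ?_⟩
  rw [Set.eq_singleton_iff_unique_mem]
  constructor
  · exact ⟨p, hpD, rfl⟩
  · rintro z ⟨q', hq', rfl⟩
    have horth : q' - p ∈ Sᗮ := by
      rw [Submodule.mem_orthogonal]
      intro u hu
      have h1 := huniq q' hq' p hpD u hu
      have h0 : ⟪q' - p, u⟫ = 0 := by
        rw [inner_sub_left, h1, sub_self]
      rw [real_inner_comm]
      exact h0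
    have hzero : S.orthogonalProjectionOnto (q' - p) = 0 :=
      Submodule.orthogonalProjectionOnto_apply_of_mem_orthogonal horth
    have heq : S.orthogonalProjectionOnto q' = S.orthogonalProjectionOnto p := by
      have hms := map_sub (S.orthogonalProjectionOnto) q' p
      rw [hzero] at hms
      exact sub_eq_zero.mp hms.symm
    simp only
    rw [heq]
end

section
/- Key contradiction step: Let v: U → ℝ with 0 ∈ U ⊆ ℝⁿ open, v = v₀ − (κ/2)|·|² with v₀ convex and κ ≥ 0, and p₁, p₂ subgradients of v₀ at 0. Let σ ∈ ℝ^{n×m} with σ*(p₁ − p₂) ≠ 0. Then for every j ∈ ℕ there exists a C² function φ_j : ℝⁿ → ℝ such that v − φ_j attains a local minimum at 0, Dφ_j(0) = (p₁ + p₂)/2, and Tr(σ* D²φ_j(0) σ) = j. -/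
open Filter Topology Matrix RealInnerProductSpace

section aux
variable {E : Type*} [NormedAddCommGroup E] [InnerProductSpace ℝ E]

noncomputable def innerSL' {E : Type*} [NormedAddCommGroup E] [InnerProductSpace ℝ E] :
    E →L[ℝ] E →L[ℝ] ℝ := innerSL ℝ

@[simp] lemma innerSL'_apply {E : Type*} [NormedAddCommGroup E] [InnerProductSpace ℝ E]
    (x y : E) : innerSL' x y = ⟪x, y⟫ := rfl

lemma aux_fderiv (q s : E) (c4 c2 c : ℝ) (y : E) :
    HasFDerivAt (fun y : E => c4 * ⟪q, y⟫ ^ 4 + c2 * ⟪q, y⟫ ^ 2 + ⟪s, y⟫ + c * ‖y‖ ^ 2)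
      ((4 * c4 * ⟪q, y⟫ ^ 3 + 2 * c2 * ⟪q, y⟫) • (innerSL ℝ q : E →L[ℝ] ℝ)
        + (innerSL ℝ s : E →L[ℝ] ℝ)
        + (2 * c) • ((innerSL' (E:=E)) y)) y := by
  have hL : HasFDerivAt (fun y : E => ⟪q, y⟫) (innerSL ℝ q : E →L[ℝ] ℝ) y :=
    (innerSL ℝ q : E →L[ℝ] ℝ).hasFDerivAt
  have hg : HasDerivAt (fun t : ℝ => c4 * t ^ 4 + c2 * t ^ 2)
      (4 * c4 * ⟪q, y⟫ ^ 3 + 2 * c2 * ⟪q, y⟫) ⟪q, y⟫ := by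
    have := ((hasDerivAt_pow 4 (⟪q, y⟫ : ℝ)).const_mul c4).add
      ((hasDerivAt_pow 2 (⟪q, y⟫ : ℝ)).const_mul c2)
    exact this.congr_deriv (by norm_num; ring)
  have h1 : HasFDerivAt (fun y : E => c4 * ⟪q, y⟫ ^ 4 + c2 * ⟪q, y⟫ ^ 2)
      ((4 * c4 * ⟪q, y⟫ ^ 3 + 2 * c2 * ⟪q, y⟫) • (innerSL ℝ q : E →L[ℝ] ℝ)) y :=
    hg.comp_hasFDerivAt y hL
  have h2 : HasFDerivAt (fun y : E => ⟪s, y⟫) (innerSL ℝ s : E →L[ℝ] ℝ) y :=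
    (innerSL ℝ s : E →L[ℝ] ℝ).hasFDerivAt
  have h3 : HasFDerivAt (fun y : E => c * ‖y‖ ^ 2)
      ((2 * c) • ((innerSL' (E:=E)) y)) y := by
    have := ((hasFDerivAt_id (𝕜 := ℝ) y).norm_sq).const_mul c
    refine this.congr_fderiv ?_
    ext z
    simp [two_smul]
    ring
  exact (h1.add h2).add h3

lemma aux_fderiv2 (q s : E) (c4 c2 c : ℝ) :
    HasFDerivAt (fun y : E =>
        (4 * c4 * ⟪q, y⟫ ^ 3 + 2 * c2 * ⟪q, y⟫) • (innerSL ℝ q : E →L[ℝ] ℝ)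
        + (innerSL ℝ s : E →L[ℝ] ℝ)
        + (2 * c) • ((innerSL' (E:=E)) y))
      (((2 * c2) • (innerSL ℝ q : E →L[ℝ] ℝ)).smulRight (innerSL ℝ q : E →L[ℝ] ℝ)
        + (2 * c) • (innerSL' (E:=E))) (0 : E) := by
  have hL : HasFDerivAt (fun y : E => ⟪q, y⟫) (innerSL ℝ q : E →L[ℝ] ℝ) (0 : E) :=
    (innerSL ℝ q : E →L[ℝ] ℝ).hasFDerivAt
  have hgd : HasDerivAt (fun t : ℝ => 4 * c4 * t ^ 3 + 2 * c2 * t) (2 * c2) (⟪q, (0 : E)⟫) := by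
    have := ((hasDerivAt_pow 3 ((0 : ℝ))).const_mul (4 * c4)).add
      ((hasDerivAt_id ((0 : ℝ))).const_mul (2 * c2))
    have h0 : (⟪q, (0 : E)⟫ : ℝ) = 0 := inner_zero_right q
    rw [h0]
    exact this.congr_deriv (by norm_num)
  have hu : HasFDerivAt (fun y : E => 4 * c4 * ⟪q, y⟫ ^ 3 + 2 * c2 * ⟪q, y⟫)
      ((2 * c2) • (innerSL ℝ q : E →L[ℝ] ℝ)) (0 : E) := by
    have := hgd.comp_hasFDerivAt (0 : E) hL
    exact this
  have h1 := hu.smul_const (innerSL ℝ q : E →L[ℝ] ℝ)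
  have h2 : HasFDerivAt (fun _ : E => (innerSL ℝ s : E →L[ℝ] ℝ)) (0 : E →L[ℝ] E →L[ℝ] ℝ) (0 : E) :=
    hasFDerivAt_const _ _
  have h3 : HasFDerivAt (fun y : E => (2 * c) • ((innerSL' (E:=E)) y))
      ((2 * c) • (innerSL' (E:=E))) (0 : E) :=
    ((2 * c) • (innerSL' (E:=E))).hasFDerivAt
  have := (h1.add h2).add h3
  exact this.congr_fderiv (by simp)

end aux

set_option maxHeartbeats 1600000 in
theorem exists_test_function_contradiction_step
    {n m : ℕ} {U : Set (EuclideanSpace ℝ (Fin n))} (hU : IsOpen U)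
    (h0 : (0 : EuclideanSpace ℝ (Fin n)) ∈ U)
    (v v₀ : EuclideanSpace ℝ (Fin n) → ℝ) (κ : ℝ) (hκ : 0 ≤ κ)
    (hconv : ConvexOn ℝ U v₀)
    (hveq : ∀ y ∈ U, v y = v₀ y - κ / 2 * ‖y‖ ^ 2)
    (p₁ p₂ : EuclideanSpace ℝ (Fin n))
    (hp₁ : ∀ y ∈ U, v₀ y ≥ v₀ 0 + ⟪p₁, y⟫)
    (hp₂ : ∀ y ∈ U, v₀ y ≥ v₀ 0 + ⟪p₂, y⟫)
    (σ : Matrix (Fin n) (Fin m) ℝ)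
    (hσp : σᵀ.mulVec ((WithLp.equiv 2 (Fin n → ℝ)) (p₁ - p₂)) ≠ 0) :
    ∀ j : ℕ, ∃ φ : EuclideanSpace ℝ (Fin n) → ℝ,
      ContDiff ℝ 2 φ ∧
      IsLocalMin (fun y => v y - φ y) 0 ∧
      gradient φ 0 = (1 / 2 : ℝ) • (p₁ + p₂) ∧
      ∑ i : Fin m,
          (fderiv ℝ (fun y => fderiv ℝ φ y) 0
              ((WithLp.equiv 2 (Fin n → ℝ)).symm (fun k => σ k i)))
            ((WithLp.equiv 2 (Fin n → ℝ)).symm (fun k => σ k i)) = (j : ℝ) := by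
  intro j
  classical
  set q : EuclideanSpace ℝ (Fin n) := (1 / 2 : ℝ) • (p₁ - p₂) with hq_def
  set s : EuclideanSpace ℝ (Fin n) := (1 / 2 : ℝ) • (p₁ + p₂) with hs_def
  set w : Fin m → ℝ := σᵀ.mulVec ((WithLp.equiv 2 (Fin n → ℝ)) (p₁ - p₂)) with hw_def
  set S : ℝ := ∑ i, w i ^ 2 with hS_def
  set T : ℝ := ∑ i, ∑ k, σ k i ^ 2 with hT_def
  have hT0 : 0 ≤ T := Finset.sum_nonneg fun i _ =>
    Finset.sum_nonneg fun k _ => sq_nonneg _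
  have hS : 0 < S := by
    obtain ⟨i, hi⟩ := Function.ne_iff.mp hσp
    exact Finset.sum_pos' (fun i _ => sq_nonneg _)
      ⟨i, Finset.mem_univ i, by have := abs_pos.mpr hi; nlinarith [sq_abs (w i)]⟩
  set lam : ℝ := 4 * ((j : ℝ) + κ * T) / S with hlam_def
  have hlam : 0 ≤ lam := by
    apply div_nonneg _ hS.le
    have : (0:ℝ) ≤ (j : ℝ) := Nat.cast_nonneg j
    nlinarith [mul_nonneg hκ hT0]
  set c4 : ℝ := -(lam ^ 3) with hc4_def
  set c2 : ℝ := lam / 2 with hc2_def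
  set c : ℝ := -(κ / 2) with hc_def
  set φ : EuclideanSpace ℝ (Fin n) → ℝ :=
    fun y => c4 * ⟪q, y⟫ ^ 4 + c2 * ⟪q, y⟫ ^ 2 + ⟪s, y⟫ + c * ‖y‖ ^ 2 with hφ_def
  refine ⟨φ, ?_, ?_, ?_, ?_⟩
  · -- ContDiff
    have hq' : ContDiff ℝ 2 fun y : EuclideanSpace ℝ (Fin n) => ⟪q, y⟫ :=
      (contDiff_const.inner ℝ contDiff_id)
    have hs' : ContDiff ℝ 2 fun y : EuclideanSpace ℝ (Fin n) => ⟪s, y⟫ :=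
      (contDiff_const.inner ℝ contDiff_id)
    exact (((contDiff_const.mul (hq'.pow 4)).add
      (contDiff_const.mul (hq'.pow 2))).add hs').add
      (contDiff_const.mul (contDiff_norm_sq ℝ))
  · -- local min
    have hmem : U ∈ 𝓝 (0 : EuclideanSpace ℝ (Fin n)) := hU.mem_nhds h0
    refine Filter.eventually_of_mem hmem fun y hy => ?_
    have hv0 : v 0 = v₀ 0 := by simpa using hveq 0 h0
    have hφ0 : φ 0 = 0 := by simp [hφ_def]
    have hvy := hveq y hy
    have h1 := hp₁ y hy
    have h2 := hp₂ y hy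
    have hinner1 : (⟪p₁, y⟫ : ℝ) = ⟪s, y⟫ + ⟪q, y⟫ := by
      rw [hq_def, hs_def, real_inner_smul_left, real_inner_smul_left,
        inner_add_left, inner_sub_left]
      ring
    have hinner2 : (⟪p₂, y⟫ : ℝ) = ⟪s, y⟫ - ⟪q, y⟫ := by
      rw [hq_def, hs_def, real_inner_smul_left, real_inner_smul_left,
        inner_add_left, inner_sub_left]
      ring
    set t : ℝ := ⟪q, y⟫ with ht_def
    have habs : |t| ≤ v₀ y - v₀ 0 - ⟪s, y⟫ := by
      rw [abs_le]
      constructor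
      · rw [hinner2] at h2; linarith
      · rw [hinner1] at h1; linarith
    have hrho : c4 * t ^ 4 + c2 * t ^ 2 ≤ |t| := by
      set u : ℝ := |t| with hu_def
      have hu : 0 ≤ u := abs_nonneg t
      have ht2 : t ^ 2 = u ^ 2 := (sq_abs t).symm
      have ht4 : t ^ 4 = u ^ 4 := by
        have : t ^ 4 = (t ^ 2) ^ 2 := by ring
        rw [this, ht2]; ring
      rw [ht2, ht4, hc4_def, hc2_def]
      rcases le_or_gt (lam * u) 2 with hcase | hcase
      · nlinarith [mul_nonneg hu (sub_nonneg.mpr hcase),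
          mul_nonneg (mul_nonneg (pow_nonneg hlam 3) (pow_nonneg hu 2)) (pow_nonneg hu 2)]
      · have hlu : 0 ≤ lam * u * u := mul_nonneg (mul_nonneg hlam hu) hu
        have h4 : 4 ≤ (lam * u) ^ 2 := by nlinarith
        have h5 : 0 ≤ (lam * u * u) * ((lam * u) ^ 2 - 4) :=
          mul_nonneg hlu (by linarith)
        nlinarith [h5, hu, hlu]
    -- conclude
    show v 0 - φ 0 ≤ v y - φ y
    have hφy : φ y = c4 * t ^ 4 + c2 * t ^ 2 + ⟪s, y⟫ + c * ‖y‖ ^ 2 := rfl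
    rw [hc_def] at hφy
    rw [hvy, hv0, hφ0, hφy]
    clear_value φ t c4 c2 c lam S T w s q
    linarith [habs, hrho, abs_nonneg t]
  · -- gradient
    have hfd : HasFDerivAt φ (innerSL ℝ s : EuclideanSpace ℝ (Fin n) →L[ℝ] ℝ) 0 := by
      have := aux_fderiv q s c4 c2 c 0
      simpa using this
    have hgrad : HasGradientAt φ s 0 := by
      rw [hasGradientAt_iff_hasFDerivAt]
      exact hfd.congr_fderiv (by ext; simp)
    rw [hgrad.gradient, hs_def]
  · -- second derivative trace
    have hfd : (fun y => fderiv ℝ φ y) = fun y =>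
        (4 * c4 * ⟪q, y⟫ ^ 3 + 2 * c2 * ⟪q, y⟫) • (innerSL ℝ q : EuclideanSpace ℝ (Fin n) →L[ℝ] ℝ)
        + (innerSL ℝ s : EuclideanSpace ℝ (Fin n) →L[ℝ] ℝ)
        + (2 * c) • (innerSL' y) :=
      funext fun y => (aux_fderiv q s c4 c2 c y).fderiv
    rw [hfd]
    have hA := (aux_fderiv2 q s c4 c2 c).fderiv
    rw [hA]
    have hval : ∀ a : EuclideanSpace ℝ (Fin n),
        ((((2 * c2) • (innerSL ℝ q : EuclideanSpace ℝ (Fin n) →L[ℝ] ℝ)).smulRight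
            (innerSL ℝ q : EuclideanSpace ℝ (Fin n) →L[ℝ] ℝ)
          + (2 * c) • (innerSL' (E := EuclideanSpace ℝ (Fin n)))) a) a
          = 2 * c2 * ⟪q, a⟫ * ⟪q, a⟫ + 2 * c * ⟪a, a⟫ := by
      intro a
      simp [ContinuousLinearMap.smulRight_apply]
      try ring
    have key : ∀ i : Fin m,
        (⟪q, ((WithLp.equiv 2 (Fin n → ℝ)).symm fun k => σ k i)⟫ : ℝ) = (1 / 2) * w i := by
      intro i
      rw [hq_def, real_inner_smul_left]
      congr 1
    have key2 : ∀ i : Fin m,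
        (⟪((WithLp.equiv 2 (Fin n → ℝ)).symm fun k => σ k i),
          ((WithLp.equiv 2 (Fin n → ℝ)).symm fun k => σ k i)⟫ : ℝ) = ∑ k, σ k i ^ 2 := by
      intro i
      simp [PiLp.inner_apply, RCLike.inner_apply, conj_trivial,
        sq]
      rw [← sq, EuclideanSpace.norm_sq_eq]
      simp [sq]
    calc (∑ i : Fin m, ((((2 * c2) • (innerSL ℝ q : EuclideanSpace ℝ (Fin n) →L[ℝ] ℝ)).smulRight
            (innerSL ℝ q : EuclideanSpace ℝ (Fin n) →L[ℝ] ℝ)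
          + (2 * c) • (innerSL' (E := EuclideanSpace ℝ (Fin n))))
            ((WithLp.equiv 2 (Fin n → ℝ)).symm fun k => σ k i))
            ((WithLp.equiv 2 (Fin n → ℝ)).symm fun k => σ k i))
        = ∑ i : Fin m, (2 * c2 * ((1/2) * w i) * ((1/2) * w i) + 2 * c * (∑ k, σ k i ^ 2)) := by
          refine Finset.sum_congr rfl fun i _ => ?_
          rw [hval, key i, key2 i]
      _ = (c2 / 2) * S + 2 * c * T := by
          rw [hS_def, hT_def, Finset.mul_sum, Finset.mul_sum, ← Finset.sum_add_distrib]
          refine Finset.sum_congr rfl fun i _ => ?_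
          ring
      _ = (j : ℝ) := by
          rw [hc2_def, hc_def, hlam_def]
          field_simp
          ring
end
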